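/- arXiv:2511.09046 — 3 statements merged into one kernel-verified Lean document; each statement's English description precedes it below -/
import Mathlib

section
/- Let a, b > 0 and let 0 < δ < min{a, π}. Then there exists ε > 0 such that for every closed ball B̄ of radius δ with B̄ ⊆ ℝ × [a, b], the image under the polar coordinate map α of the boundary circle ∂B̄ satisfies reach(α(∂B̄)) ≥ ε. -/
open Set Metric Filter
open scoped ENNReal NNReal

noncomputable section

/-- The closed ε-neighbourhood of a set: the closure of the union of open ε-balls
centred at points of `E`. -/
def epsNbhd {X : Type*} [MetricSpace X] (E : Set X) (ε : ℝ) : Set X :=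
  closure (⋃ x ∈ E, Metric.ball x ε)

/-- `Unp E` is the set of points having a unique nearest point in (the closure of) `E`. -/
def unp {X : Type*} [MetricSpace X] (E : Set X) : Set X :=
  {z | ∃! y, y ∈ closure E ∧ dist z y = Metric.infDist z E}

/-- The local reach of `E` at `y`: the supremum of radii `r` such that the open ball
`B(y, r)` is contained in `Unp E`. -/
def reachAt {X : Type*} [MetricSpace X] (E : Set X) (y : X) : ℝ≥0∞ :=
  ⨆ (r : ℝ≥0∞) (_ : EMetric.ball y r ⊆ unp E), r

/-- The reach of a set `E` (defined via the closure of `E`). -/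
def reach {X : Type*} [MetricSpace X] (E : Set X) : ℝ≥0∞ :=
  ⨅ y ∈ closure E, reachAt E y

/-- The point of the Euclidean plane with coordinates `(a, b)`. -/
def pt (a b : ℝ) : EuclideanSpace ℝ (Fin 2) := (WithLp.equiv 2 (Fin 2 → ℝ)).symm ![a, b]

/-- The polar coordinate map `(x, r) ↦ (r cos x, r sin x)`, viewed as a self-map of the
Euclidean plane (first coordinate = angle, second coordinate = radius). -/
def polarMap (v : EuclideanSpace ℝ (Fin 2)) : EuclideanSpace ℝ (Fin 2) :=
  pt (v 1 * Real.cos (v 0)) (v 1 * Real.sin (v 0))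

/-- A set `Γ ⊆ ℝ²` is a C¹ curve if it is the image of an injective continuously
differentiable map `γ : [0,1] → ℝ²` with nonvanishing derivative. -/
def IsC1Curve (Γ : Set (EuclideanSpace ℝ (Fin 2))) : Prop :=
  ∃ γ : ℝ → EuclideanSpace ℝ (Fin 2),
    Set.InjOn γ (Set.Icc 0 1) ∧
    ContDiffOn ℝ 1 γ (Set.Icc 0 1) ∧
    (∀ t ∈ Set.Icc (0:ℝ) 1, derivWithin γ (Set.Icc 0 1) t ≠ 0) ∧
    Γ = γ '' Set.Icc 0 1

/-!
Let `p = α u` be a nearest point of `E = α '' ∂B` to `z` and `q = α v` another one. Since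
`‖z - q‖ = ‖z - p‖`, we have `‖q - p‖² = 2 ⟪q - p, z - p⟫`. The left side is at least
`m ‖v - u‖²`, because radii are at least `a` and the angles of `u` and `v` differ by at most
`2δ < 2π`. On the right, write `q - p = Dα(u)(v - u) + O(‖v - u‖²)` and split `v - u` along the
tangent and the normal of the circle at `u`: the tangential part is killed because `z - p` is
normal to `E` at `p`, and the normal part is `O(‖v - u‖² / δ)` because `u` and `v` lie on a circle
of radius `δ`. So `⟪q - p, z - p⟫ ≤ K ‖v - u‖² ‖z - p‖`, which forces `v = u` as soon as
`‖z - p‖ < m / (2K)`.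
-/

open Real InnerProductSpace

local notation "ℝ²" => EuclideanSpace ℝ (Fin 2)

lemma ofReal_le_reach_of_unique_nearest {X : Type*} [MetricSpace X] [ProperSpace X] {E : Set X}
    (hE : IsClosed E) {ε : ℝ}
    (huniq : ∀ z, infDist z E < ε → ∀ p ∈ E, ∀ q ∈ E,
      dist z p = infDist z E → dist z q = infDist z E → q = p) :
    ENNReal.ofReal ε ≤ reach E := by
  refine le_iInf₂ fun y hy => le_iSup₂_of_le (ENNReal.ofReal ε) ?_ le_rfl
  intro z hz
  have hzy : dist z y < ε := edist_lt_ofReal.1 hz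
  rw [hE.closure_eq] at hy
  change ∃! p, p ∈ closure E ∧ dist z p = infDist z E
  rw [hE.closure_eq]
  have hzE : infDist z E < ε := (infDist_le_dist_of_mem hy).trans_lt hzy
  obtain ⟨p, hp, hpz⟩ := hE.exists_infDist_eq_dist ⟨y, hy⟩ z
  exact ⟨p, ⟨hp, hpz.symm⟩, fun q hq => huniq z hzE p hp q hq.1 hpz.symm hq.2⟩

section InnerProductSpace

variable {F : Type*} [NormedAddCommGroup F] [InnerProductSpace ℝ F]

theorem HasDerivAt.inner_eq_zero_of_isLocalMin_norm_sub {f : ℝ → F} {f' z : F} {θ : ℝ}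
    (hf : HasDerivAt f f' θ) (hmin : IsLocalMin (fun t => ‖z - f t‖) θ) :
    ⟪f', z - f θ⟫_ℝ = 0 := by
  have hsq : IsLocalMin (fun t => ‖z - f t‖ ^ 2) θ :=
    hmin.mono fun t ht => pow_le_pow_left₀ (norm_nonneg _) ht 2
  have h : 2 * ⟪z - f θ, 0 - f'⟫_ℝ = 0 :=
    hsq.hasDerivAt_eq_zero ((hasDerivAt_const θ z).sub hf).norm_sq
  rw [zero_sub, inner_neg_right, real_inner_comm] at h
  linarith

theorem two_mul_inner_sub_sub_eq_neg_norm_sq {c u v : F} (h : ‖v - c‖ = ‖u - c‖) :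
    2 * ⟪v - u, u - c⟫_ℝ = -‖v - u‖ ^ 2 := by
  have := norm_add_sq_real (v - u) (u - c)
  rw [sub_add_sub_cancel, h] at this
  linarith

theorem norm_sub_sq_eq_two_mul_inner_of_norm_sub_eq {p q z : F} (h : ‖z - q‖ = ‖z - p‖) :
    ‖q - p‖ ^ 2 = 2 * ⟪q - p, z - p⟫_ℝ := by
  have := norm_sub_sq_real (z - p) (q - p)
  rw [sub_sub_sub_cancel_right, h, real_inner_comm] at this
  linarith

end InnerProductSpace

lemma abs_cos_sub_one_le (t : ℝ) : |cos t - 1| ≤ t ^ 2 / 2 := by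
  rw [abs_sub_comm, abs_of_nonneg (by linarith [cos_le_one t])]
  linarith [one_sub_sq_div_two_le_cos (x := t)]

lemma abs_sin_sub_self_le (t : ℝ) : |sin t - t| ≤ t ^ 2 := by
  have hcube : |sin t - t| ≤ |t| ^ 3 / 6 := by rw [abs_sub_comm]; exact abs_sub_sin_le t
  have hlin : |sin t - t| ≤ 2 * |t| := by
    linarith [abs_sub (sin t) t, abs_sin_le_abs (x := t)]
  rw [← sq_abs]
  rcases le_total |t| 2 with ht | ht <;> nlinarith [abs_nonneg t]

lemma sin_div_mul_le_sin {δ m : ℝ} (hδ : 0 < δ) (hδπ : δ ≤ π) (hm : 0 ≤ m) (hmδ : m ≤ δ) :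
    sin δ / δ * m ≤ sin m := by
  have hw : m / δ ≤ 1 := (div_le_one hδ).2 hmδ
  have h := strictConcaveOn_sin_Icc.concaveOn.2 (x := 0) (y := δ) ⟨le_rfl, pi_pos.le⟩
    ⟨hδ.le, hδπ⟩ (sub_nonneg.2 hw) (div_nonneg hm hδ.le) (sub_add_cancel 1 (m / δ))
  simp only [smul_eq_mul, mul_zero, zero_add, sin_zero, div_mul_cancel₀ m hδ.ne'] at h
  rwa [div_mul_comm]

lemma sq_sin_div_mul_sq_le_one_sub_cos {δ h : ℝ} (hδ : 0 < δ) (hδπ : δ ≤ π)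
    (hh : |h| ≤ 2 * δ) : (sin δ / δ) ^ 2 / 2 * h ^ 2 ≤ 1 - cos h := by
  have hsin := sin_div_mul_le_sin hδ hδπ (by positivity : 0 ≤ |h| / 2) (by linarith)
  have hcos : 1 - cos h = 2 * sin (|h| / 2) ^ 2 := by
    rw [← cos_abs, show |h| = 2 * (|h| / 2) by ring, cos_two_mul, ← sin_sq_add_cos_sq (|h| / 2)]
    ring_nf
  have hnn : 0 ≤ sin δ / δ * (|h| / 2) :=
    mul_nonneg (div_nonneg (sin_nonneg_of_nonneg_of_le_pi hδ.le hδπ) hδ.le) (by positivity)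
  rw [hcos]
  nlinarith [mul_self_le_mul_self hnn hsin, sq_abs h]

@[simp] lemma pt_apply_zero (a b : ℝ) : pt a b 0 = a := rfl
@[simp] lemma pt_apply_one (a b : ℝ) : pt a b 1 = b := rfl

lemma EuclideanSpace.norm_sq_fin_two (v : ℝ²) : ‖v‖ ^ 2 = v 0 ^ 2 + v 1 ^ 2 := by
  simp [EuclideanSpace.real_norm_sq_eq, Fin.sum_univ_two]

def angleVec (x : ℝ) : ℝ² := pt (cos x) (sin x)

@[simp] lemma norm_angleVec (x : ℝ) : ‖angleVec x‖ = 1 := by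
  simp [EuclideanSpace.norm_eq, Fin.sum_univ_two, angleVec]

lemma angleVec_eq (x : ℝ) :
    angleVec x = cos x • EuclideanSpace.single 0 1 + sin x • EuclideanSpace.single 1 1 := by
  ext i; fin_cases i <;> simp [angleVec]

lemma hasDerivAt_angleVec (x : ℝ) : HasDerivAt angleVec (angleVec (x + π / 2)) x := by
  have h := ((hasDerivAt_cos x).smul_const (EuclideanSpace.single (0 : Fin 2) (1 : ℝ))).add
    ((hasDerivAt_sin x).smul_const (EuclideanSpace.single (1 : Fin 2) (1 : ℝ)))
  rw [angleVec_eq, cos_add_pi_div_two, sin_add_pi_div_two]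
  exact h.congr_of_eventuallyEq (Eventually.of_forall angleVec_eq)

lemma polarMap_eq_smul (v : ℝ²) : polarMap v = v 1 • angleVec (v 0) := by
  ext i; fin_cases i <;> simp [polarMap, angleVec]

def polarDeriv (u : ℝ²) : ℝ² →L[ℝ] ℝ² :=
  (EuclideanSpace.proj 1).smulRight (angleVec (u 0)) +
    (u 1 • EuclideanSpace.proj 0).smulRight (angleVec (u 0 + π / 2))

lemma polarDeriv_apply (u h : ℝ²) :
    polarDeriv u h = h 1 • angleVec (u 0) + (u 1 * h 0) • angleVec (u 0 + π / 2) := by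
  simp [polarDeriv]

lemma hasFDerivAt_polarMap (u : ℝ²) : HasFDerivAt polarMap (polarDeriv u) u := by
  have h0 := (hasDerivAt_angleVec ((EuclideanSpace.proj 0 : ℝ² →L[ℝ] ℝ) u)).hasFDerivAt.comp u
    (EuclideanSpace.proj (0 : Fin 2) : ℝ² →L[ℝ] ℝ).hasFDerivAt
  refine ((EuclideanSpace.proj (1 : Fin 2) : ℝ² →L[ℝ] ℝ).hasFDerivAt.smul h0
    |>.congr_of_eventuallyEq (Eventually.of_forall polarMap_eq_smul)).congr_fderiv ?_
  ext h : 1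
  simp [polarDeriv_apply, mul_smul, add_comm]

lemma norm_angleVec_sub_sub_le (x y : ℝ) :
    ‖angleVec y - angleVec x - (y - x) • angleVec (x + π / 2)‖ ≤ 2 * (y - x) ^ 2 := by
  have hsq : ‖angleVec y - angleVec x - (y - x) • angleVec (x + π / 2)‖ ^ 2
      = (cos (y - x) - 1) ^ 2 + (sin (y - x) - (y - x)) ^ 2 := by
    rw [EuclideanSpace.norm_sq_fin_two]
    simp only [angleVec, PiLp.sub_apply, PiLp.smul_apply, pt_apply_zero, pt_apply_one,
      smul_eq_mul, cos_add_pi_div_two, sin_add_pi_div_two]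
    obtain ⟨t, rfl⟩ : ∃ t, y = x + t := ⟨y - x, by ring⟩
    rw [add_sub_cancel_left, cos_add, sin_add]
    linear_combination ((cos t - 1) ^ 2 + (sin t - t) ^ 2) * sin_sq_add_cos_sq x
  rw [← sq_le_sq₀ (norm_nonneg _) (by positivity), hsq]
  have h1 := abs_cos_sub_one_le (y - x)
  have h2 := abs_sin_sub_self_le (y - x)
  nlinarith [sq_abs (cos (y - x) - 1), sq_abs (sin (y - x) - (y - x)), abs_nonneg (cos (y - x) - 1),
    abs_nonneg (sin (y - x) - (y - x)), sq_nonneg (y - x)]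

lemma continuous_polarMap : Continuous polarMap :=
  continuous_iff_continuousAt.2 fun u => (hasFDerivAt_polarMap u).continuousAt

lemma norm_polarMap_sub_sub_polarDeriv_le {b : ℝ} (u v : ℝ²) (hs : 0 ≤ v 1) (hsb : v 1 ≤ b) :
    ‖polarMap v - polarMap u - polarDeriv u (v - u)‖ ≤ (2 * b + 1) * ‖v - u‖ ^ 2 := by
  have hsplit : polarMap v - polarMap u - polarDeriv u (v - u) =
      v 1 • (angleVec (v 0) - angleVec (u 0) - (v 0 - u 0) • angleVec (u 0 + π / 2)) +
        ((v 1 - u 1) * (v 0 - u 0)) • angleVec (u 0 + π / 2) := by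
    rw [polarMap_eq_smul, polarMap_eq_smul, polarDeriv_apply]
    simp only [PiLp.sub_apply]
    module
  have hΔ := EuclideanSpace.norm_sq_fin_two (v - u)
  simp only [PiLp.sub_apply] at hΔ
  have hT := mul_le_mul hsb (norm_angleVec_sub_sub_le (u 0) (v 0)) (norm_nonneg _) (hs.trans hsb)
  rw [hsplit]
  refine (norm_add_le _ _).trans ?_
  rw [norm_smul, norm_smul, norm_angleVec, Real.norm_of_nonneg hs, Real.norm_eq_abs, abs_mul,
    mul_one]
  nlinarith [sq_nonneg (|v 1 - u 1| - |v 0 - u 0|), sq_abs (v 1 - u 1), sq_abs (v 0 - u 0),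
    sq_nonneg (v 1 - u 1)]

lemma norm_polarDeriv_le (u h : ℝ²) (hr : 0 ≤ u 1) : ‖polarDeriv u h‖ ≤ (1 + u 1) * ‖h‖ := by
  rw [polarDeriv_apply]
  refine (norm_add_le _ _).trans ?_
  rw [norm_smul, norm_smul, norm_angleVec, norm_angleVec, mul_one, mul_one, norm_mul,
    Real.norm_of_nonneg hr]
  nlinarith [PiLp.norm_apply_le h 0, PiLp.norm_apply_le h 1, norm_nonneg (h 0)]

lemma norm_polarMap_sub_sq (u v : ℝ²) :
    ‖polarMap v - polarMap u‖ ^ 2 = (v 1 - u 1) ^ 2 + 2 * u 1 * v 1 * (1 - cos (v 0 - u 0)) := by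
  rw [EuclideanSpace.norm_sq_fin_two]
  simp only [polarMap, PiLp.sub_apply, pt_apply_zero, pt_apply_one, cos_sub]
  linear_combination v 1 ^ 2 * sin_sq_add_cos_sq (v 0) + u 1 ^ 2 * sin_sq_add_cos_sq (u 0)

lemma min_mul_norm_sub_sq_le_norm_polarMap_sub_sq {a δ : ℝ} {u v : ℝ²} (ha : 0 ≤ a)
    (hδ : 0 < δ) (hδπ : δ ≤ π) (hr : a ≤ u 1) (hs : a ≤ v 1) (hx : |v 0 - u 0| ≤ 2 * δ) :
    min 1 ((a * sin δ / δ) ^ 2) * ‖v - u‖ ^ 2 ≤ ‖polarMap v - polarMap u‖ ^ 2 := by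
  set t := v 0 - u 0
  have hcos := sq_sin_div_mul_sq_le_one_sub_cos hδ hδπ hx
  have hrs : a ^ 2 ≤ u 1 * v 1 := by nlinarith
  have hΔ := EuclideanSpace.norm_sq_fin_two (v - u)
  simp only [PiLp.sub_apply] at hΔ
  have hm1 := min_le_left 1 ((a * sin δ / δ) ^ 2)
  have hm2 := min_le_right 1 ((a * sin δ / δ) ^ 2)
  rw [norm_polarMap_sub_sq, hΔ]
  calc min 1 ((a * sin δ / δ) ^ 2) * (t ^ 2 + (v 1 - u 1) ^ 2)
      ≤ (a * sin δ / δ) ^ 2 * t ^ 2 + (v 1 - u 1) ^ 2 := by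
        nlinarith [mul_le_mul_of_nonneg_right hm2 (sq_nonneg t), sq_nonneg (v 1 - u 1)]
    _ = 2 * a ^ 2 * ((sin δ / δ) ^ 2 / 2 * t ^ 2) + (v 1 - u 1) ^ 2 := by ring
    _ ≤ 2 * (u 1 * v 1) * (1 - cos t) + (v 1 - u 1) ^ 2 := by
        gcongr
        nlinarith [cos_le_one t, sq_nonneg a]
    _ = _ := by ring

lemma EuclideanSpace.real_inner_fin_two (v w : ℝ²) : ⟪v, w⟫_ℝ = v 0 * w 0 + v 1 * w 1 := by
  simp [EuclideanSpace.inner_eq_star_dotProduct, dotProduct, Fin.sum_univ_two, mul_comm]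

lemma eq_inner_smul_angleVec_add_inner_smul_angleVec (h : ℝ²) (θ : ℝ) :
    h = ⟪h, angleVec θ⟫_ℝ • angleVec θ + ⟪h, angleVec (θ + π / 2)⟫_ℝ • angleVec (θ + π / 2) := by
  have hθ := sin_sq_add_cos_sq θ
  ext i; fin_cases i <;>
    simp [EuclideanSpace.real_inner_fin_two, angleVec, cos_add_pi_div_two, sin_add_pi_div_two] <;>
    linear_combination (-h _) * hθ

lemma exists_eq_add_smul_angleVec {c u : ℝ²} {δ : ℝ} (hu : u ∈ sphere c δ) :
    ∃ θ, u = c + δ • angleVec θ := by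
  set w := Complex.orthonormalBasisOneI.repr.symm (u - c)
  have hw : ‖w‖ = δ := by rw [LinearIsometryEquiv.norm_map, ← dist_eq_norm, mem_sphere.1 hu]
  have hre : w.re = u 0 - c 0 := by simp [w]
  have him : w.im = u 1 - c 1 := by simp [w]
  have h0 := Complex.norm_mul_cos_arg w
  have h1 := Complex.norm_mul_sin_arg w
  rw [hw, hre] at h0
  rw [hw, him] at h1
  refine ⟨Complex.arg w, ?_⟩
  ext i; fin_cases i <;> simp [angleVec] <;> linarith

lemma inner_polarDeriv_angleVec_eq_zero {c z : ℝ²} {δ θ : ℝ} (hδ : δ ≠ 0)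
    (hmin : ∀ t, ‖z - polarMap (c + δ • angleVec θ)‖ ≤ ‖z - polarMap (c + δ • angleVec t)‖) :
    ⟪polarDeriv (c + δ • angleVec θ) (angleVec (θ + π / 2)), z - polarMap (c + δ • angleVec θ)⟫_ℝ
      = 0 := by
  have hcurve := (hasFDerivAt_polarMap _).comp_hasDerivAt θ
    (((hasDerivAt_angleVec θ).const_smul δ).const_add c)
  have h := hcurve.inner_eq_zero_of_isLocalMin_norm_sub (Eventually.of_forall hmin)
  rw [map_smul, inner_smul_left] at h
  exact (mul_eq_zero.1 h).resolve_left hδ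

lemma inner_polarMap_sub_le {b δ θ : ℝ} {c v w : ℝ²} (hδ : 0 < δ) (hv : ‖v - c‖ = δ)
    (hr : 0 ≤ (c + δ • angleVec θ) 1) (hrb : (c + δ • angleVec θ) 1 ≤ b) (hs : 0 ≤ v 1)
    (hsb : v 1 ≤ b)
    (horth : ⟪polarDeriv (c + δ • angleVec θ) (angleVec (θ + π / 2)), w⟫_ℝ = 0) :
    ⟪polarMap v - polarMap (c + δ • angleVec θ), w⟫_ℝ
      ≤ (2 * b + 1 + (1 + b) / (2 * δ)) * ‖v - (c + δ • angleVec θ)‖ ^ 2 * ‖w‖ := by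
  set u := c + δ • angleVec θ
  set L := polarDeriv u
  set h := v - u
  have hnormal : 2 * δ * ⟪h, angleVec θ⟫_ℝ = -‖h‖ ^ 2 := by
    have := two_mul_inner_sub_sub_eq_neg_norm_sq (c := c) (u := u) (v := v)
      (by rw [hv, add_sub_cancel_left, norm_smul, norm_angleVec, Real.norm_of_nonneg hδ.le,
        mul_one])
    rwa [add_sub_cancel_left, inner_smul_right, ← mul_assoc] at this
  have hLh : ⟪L h, w⟫_ℝ = ⟪h, angleVec θ⟫_ℝ * ⟪L (angleVec θ), w⟫_ℝ := by
    conv_lhs => rw [eq_inner_smul_angleVec_add_inner_smul_angleVec h θ]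
    simp only [map_add, map_smul, inner_add_left, inner_smul_left, horth, mul_zero, add_zero,
      RCLike.conj_to_real]
  have hsplit : ⟪polarMap v - polarMap u, w⟫_ℝ
      = ⟪polarMap v - polarMap u - L h, w⟫_ℝ + ⟪h, angleVec θ⟫_ℝ * ⟪L (angleVec θ), w⟫_ℝ := by
    rw [← hLh, ← inner_add_left, sub_add_cancel]
  have hrem : ⟪polarMap v - polarMap u - L h, w⟫_ℝ ≤ (2 * b + 1) * ‖h‖ ^ 2 * ‖w‖ :=
    (real_inner_le_norm _ _).trans (mul_le_mul_of_nonneg_right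
      (norm_polarMap_sub_sub_polarDeriv_le u v hs hsb) (norm_nonneg w))
  have hL : |⟪L (angleVec θ), w⟫_ℝ| ≤ (1 + b) * ‖w‖ := by
    refine (abs_real_inner_le_norm _ _).trans (mul_le_mul_of_nonneg_right ?_ (norm_nonneg w))
    have := norm_polarDeriv_le u (angleVec θ) hr
    rw [norm_angleVec, mul_one] at this
    linarith
  have hlin : ⟪h, angleVec θ⟫_ℝ * ⟪L (angleVec θ), w⟫_ℝ ≤ (1 + b) / (2 * δ) * ‖h‖ ^ 2 * ‖w‖ := by
    have hβ : |⟪h, angleVec θ⟫_ℝ| = ‖h‖ ^ 2 / (2 * δ) := by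
      rw [eq_div_iff (by positivity), ← abs_of_pos (by positivity : 0 < 2 * δ), ← abs_mul,
        mul_comm, hnormal, abs_neg, abs_of_nonneg (by positivity)]
    calc _ ≤ |⟪h, angleVec θ⟫_ℝ| * |⟪L (angleVec θ), w⟫_ℝ| := (le_abs_self _).trans (abs_mul _ _).le
      _ ≤ ‖h‖ ^ 2 / (2 * δ) * ((1 + b) * ‖w‖) := by rw [hβ]; gcongr
      _ = _ := by ring
  rw [hsplit]
  linarith

-- `m / (2K)`, with `m` the constant of `min_mul_norm_sub_sq_le_norm_polarMap_sub_sq` and `K` that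
-- of `inner_polarMap_sub_le`.
def polarReachBound (a b δ : ℝ) : ℝ :=
  min 1 ((a * sin δ / δ) ^ 2) / (2 * (2 * b + 1 + (1 + b) / (2 * δ)))

lemma polarReachBound_pos {a b δ : ℝ} (ha : 0 < a) (hb : 0 < b) (hδ : 0 < δ) (hδπ : δ < π) :
    0 < polarReachBound a b δ := by
  have := sin_pos_of_pos_of_lt_pi hδ hδπ
  unfold polarReachBound
  positivity

lemma eq_of_norm_sub_polarMap_eq {a b δ : ℝ} {c u v z : ℝ²} (ha : 0 ≤ a) (hδ : 0 < δ)
    (hδπ : δ ≤ π) (hstrip : ∀ w ∈ sphere c δ, w 1 ∈ Icc a b) (hu : u ∈ sphere c δ)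
    (hv : v ∈ sphere c δ) (hmin : ∀ w ∈ sphere c δ, ‖z - polarMap u‖ ≤ ‖z - polarMap w‖)
    (heq : ‖z - polarMap v‖ = ‖z - polarMap u‖) (hz : ‖z - polarMap u‖ < polarReachBound a b δ) :
    v = u := by
  obtain ⟨θ, rfl⟩ := exists_eq_add_smul_angleVec hu
  obtain ⟨hr, hrb⟩ := hstrip _ hu
  obtain ⟨hs, hsb⟩ := hstrip v hv
  rw [mem_sphere, dist_eq_norm] at hu hv
  have horth := inner_polarDeriv_angleVec_eq_zero hδ.ne' fun t =>
    hmin _ (mem_sphere.2 (by simp [dist_eq_norm, norm_smul, abs_of_pos hδ]))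
  have hupper := inner_polarMap_sub_le hδ hv (ha.trans hr) hrb (ha.trans hs) hsb horth
  have hx : |v 0 - (c + δ • angleVec θ) 0| ≤ 2 * δ := by
    have := PiLp.norm_apply_le (v - (c + δ • angleVec θ)) 0
    rw [PiLp.sub_apply, Real.norm_eq_abs] at this
    linarith [norm_sub_le_norm_sub_add_norm_sub v c (c + δ • angleVec θ), norm_sub_rev c
      (c + δ • angleVec θ)]
  have hlower := min_mul_norm_sub_sq_le_norm_polarMap_sub_sq ha hδ hδπ hr hs hx
  rw [norm_sub_sq_eq_two_mul_inner_of_norm_sub_eq heq] at hlower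
  have hK : 0 < 2 * b + 1 + (1 + b) / (2 * δ) := by
    have : 0 ≤ b := ha.trans (hr.trans hrb)
    positivity
  rw [polarReachBound, lt_div_iff₀ (by positivity)] at hz
  have hΔ : ‖v - (c + δ • angleVec θ)‖ = 0 := by
    by_contra hne
    have hpos := pow_pos ((norm_nonneg _).lt_of_ne' hne) 2
    nlinarith [mul_lt_mul_of_pos_right hz hpos]
  rwa [norm_eq_zero, sub_eq_zero] at hΔ

/-- For `a, b > 0` and `0 < δ < min {a, π}`, there is a uniform `ε > 0` such that the image
under the polar coordinate map of the boundary circle of any closed `δ`-ball contained in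
`ℝ × [a, b]` has reach at least `ε`. -/
theorem reach_polar_image_of_circles
    (a b : ℝ) (ha : 0 < a) (hb : 0 < b) (δ : ℝ) (hδ : 0 < δ) (hδ' : δ < min a Real.pi) :
    ∃ ε > (0:ℝ), ∀ c : EuclideanSpace ℝ (Fin 2),
      Metric.closedBall c δ ⊆ {v : EuclideanSpace ℝ (Fin 2) | v 1 ∈ Set.Icc a b} →
      ENNReal.ofReal ε ≤ reach (polarMap '' Metric.sphere c δ) := by
  have hδπ : δ < π := hδ'.trans_le (min_le_right _ _)
  refine ⟨polarReachBound a b δ, polarReachBound_pos ha hb hδ hδπ, fun c hc => ?_⟩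
  refine ofReal_le_reach_of_unique_nearest
    ((isCompact_sphere c δ).image continuous_polarMap).isClosed ?_
  rintro z hz _ ⟨u, hu, rfl⟩ _ ⟨v, hv, rfl⟩ hpu hqv
  rw [dist_eq_norm] at hpu hqv
  have hmin : ∀ w ∈ sphere c δ, ‖z - polarMap u‖ ≤ ‖z - polarMap w‖ := fun w hw => by
    rw [hpu, ← dist_eq_norm]
    exact infDist_le_dist_of_mem (mem_image_of_mem _ hw)
  rw [eq_of_norm_sub_polarMap_eq ha.le hδ hδπ.le (fun w hw => hc (sphere_subset_closedBall hw))
    hu hv hmin (hqv.trans hpu.symm) (hpu ▸ hz)]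
end
end

section
/- There exist a compact set E ⊆ ℝ², ε > 0, and a Lipschitz function S : [0, 2π] → ℝ with S(x) > 0 for all x and S(0) = S(2π), such that ∂E_ε = { S(θ)·(cos θ, sin θ) : θ ∈ [0, 2π] } and S is not differentiable at any rational number q ∈ ℚ ∩ (0, 2π]. -/
open Set Metric Filter
open scoped ENNReal NNReal

noncomputable section

/-!
Take `S = 5/4 + T/4` with `T θ = ∑ₙ 8^-(n+1) |sin (θ - qₙ)|` for an enumeration `(qₙ)` of `ℚ`.
Choosing a sign for each term shows that at every angle `q` the function `T` lies above a sinusoid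
`T q cos (θ - q) + b sin (θ - q)` touching it at `q`, with `|b| ≤ 1/7`. At `q = qₘ` the sign of the
vanishing `m`-th term is free, which gives two such sinusoids with slopes `2 · 8^-(m+1)` apart,
so `T` has a corner at `qₘ`.

A supporting sinusoid yields a unit disc tangent from inside to the polar graph of `S` at
`S q (cos q, sin q)`, avoiding the whole graph and centred within `1/2` of the origin. Let `E` be
the set of all points within `1/2` of the origin at distance at least `1` from the graph. Every unit
disc centred in `E` stays inside the star domain `{r (cos θ, sin θ) : r ≤ S θ}`, since it contains
the origin and misses the graph, while the tangent discs exhaust the interior of that domain. So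
`E_1` is the star domain, and its boundary is the graph.
-/

namespace PolarBoundary

open Real Topology

local notation "ℝ²" => EuclideanSpace ℝ (Fin 2)

lemma dist_pt_sq (a b c d : ℝ) : dist (pt a b) (pt c d) ^ 2 = (a - c) ^ 2 + (b - d) ^ 2 := by
  rw [EuclideanSpace.dist_eq, sq_sqrt (by positivity)]
  simp [Fin.sum_univ_two, pt, Real.dist_eq, sq_abs]

lemma norm_pt_sq (a b : ℝ) : ‖pt a b‖ ^ 2 = a ^ 2 + b ^ 2 := by
  rw [EuclideanSpace.norm_sq_eq]
  simp [Fin.sum_univ_two, pt]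

def polarPt (r θ : ℝ) : ℝ² := pt (r * cos θ) (r * sin θ)

def rotPt (q α β : ℝ) : ℝ² := pt (α * cos q - β * sin q) (α * sin q + β * cos q)

lemma dist_polarPt_rotPt_sq (r θ q α β : ℝ) :
    dist (polarPt r θ) (rotPt q α β) ^ 2
      = r ^ 2 - 2 * r * (α * cos (θ - q) + β * sin (θ - q)) + (α ^ 2 + β ^ 2) := by
  rw [polarPt, rotPt, dist_pt_sq, cos_sub, sin_sub]
  linear_combination r ^ 2 * sin_sq_add_cos_sq θ
    + (α ^ 2 + β ^ 2) * sin_sq_add_cos_sq q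

lemma norm_rotPt_sq (q α β : ℝ) : ‖rotPt q α β‖ ^ 2 = α ^ 2 + β ^ 2 := by
  rw [rotPt, norm_pt_sq]
  linear_combination (α ^ 2 + β ^ 2) * sin_sq_add_cos_sq q

lemma smul_polarPt (t r θ : ℝ) : t • polarPt r θ = polarPt (t * r) θ := by
  ext i; fin_cases i <;> simp [polarPt, pt, mul_assoc]

lemma exists_eq_polarPt_norm (x : ℝ²) : ∃ θ ∈ Icc 0 (2 * π), x = polarPt ‖x‖ θ := by
  set z : ℂ := ⟨x 0, x 1⟩
  have hz : ‖z‖ = ‖x‖ := by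
    rw [← sq_eq_sq₀ (norm_nonneg _) (norm_nonneg _), Complex.sq_norm, Complex.normSq_apply,
      EuclideanSpace.norm_sq_eq]
    simp [Fin.sum_univ_two, z, sq]
  have hx : ∀ θ, cos θ = cos z.arg → sin θ = sin z.arg → x = polarPt ‖x‖ θ := by
    intro θ hc hs
    ext i; fin_cases i
    · simp [polarPt, pt, hc, ← hz, Complex.norm_mul_cos_arg, z]
    · simp [polarPt, pt, hs, ← hz, Complex.norm_mul_sin_arg, z]
  obtain ⟨hlo, hhi⟩ := Complex.arg_mem_Ioc z
  rcases le_or_gt 0 z.arg with h | h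
  · exact ⟨z.arg, ⟨h, by linarith [pi_pos]⟩, hx _ rfl rfl⟩
  · exact ⟨z.arg + 2 * π, ⟨by linarith, by linarith⟩, hx _ (cos_add_two_pi _) (sin_add_two_pi _)⟩

lemma dist_smul_lt_of_norm_lt {E : Type*} [NormedAddCommGroup E] [NormedSpace ℝ E] {x c : E}
    {ρ t : ℝ} (hc : ‖c‖ < ρ) (hx : dist x c ≤ ρ) (ht₀ : 0 ≤ t) (ht₁ : t < 1) :
    dist (t • x) c < ρ := by
  rw [dist_eq_norm] at hx ⊢
  calc ‖t • x - c‖ = ‖t • (x - c) + (1 - t) • (-c)‖ := by congr 1; module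
    _ ≤ t * ‖x - c‖ + (1 - t) * ‖c‖ := by
      refine (norm_add_le _ _).trans_eq ?_
      rw [norm_smul, norm_smul, norm_neg, norm_of_nonneg ht₀, norm_of_nonneg (by linarith)]
    _ < ρ := by nlinarith

def HasSupportingSinusoid (f : ℝ → ℝ) (q b : ℝ) : Prop :=
  ∀ θ, f q * cos (θ - q) + b * sin (θ - q) ≤ f θ

lemma HasSupportingSinusoid.const_mul {f : ℝ → ℝ} {q b c : ℝ} (h : HasSupportingSinusoid f q b)
    (hc : 0 ≤ c) : HasSupportingSinusoid (fun θ => c * f θ) q (c * b) := fun θ => by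
  nlinarith [h θ]

lemma HasSupportingSinusoid.deriv_eq {f : ℝ → ℝ} {q b : ℝ} (h : HasSupportingSinusoid f q b)
    (hf : DifferentiableAt ℝ f q) : deriv f q = b := by
  set g := fun θ => f q * cos (θ - q) + b * sin (θ - q)
  have hg : HasDerivAt g b q := by
    have hlin : HasDerivAt (fun θ : ℝ => θ - q) 1 q := (hasDerivAt_id' q).sub_const q
    exact ((hlin.cos.const_mul (f q)).fun_add (hlin.sin.const_mul b)).congr_deriv (by simp)
  have hmin : IsLocalMin (fun θ => f θ - g θ) q :=
    Eventually.of_forall fun θ => by simpa [g] using h θ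
  linarith [hmin.hasDerivAt_eq_zero (hf.hasDerivAt.sub hg)]

lemma not_differentiableAt_of_hasSupportingSinusoid {f : ℝ → ℝ} {q b₁ b₂ : ℝ}
    (h₁ : HasSupportingSinusoid f q b₁) (h₂ : HasSupportingSinusoid f q b₂) (hne : b₁ ≠ b₂) :
    ¬ DifferentiableAt ℝ f q := fun hf =>
  hne ((h₁.deriv_eq hf).symm.trans (h₂.deriv_eq hf))

section SinSeries

variable {w : ℕ → ℝ} (a : ℕ → ℝ)

def sinSeries (w a : ℕ → ℝ) (θ : ℝ) : ℝ := ∑' n, w n * |sin (θ - a n)|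

lemma summable_mul_of_abs_le (hw₀ : ∀ n, 0 ≤ w n) (hw : Summable w) {s : ℕ → ℝ} {M : ℝ}
    (hs : ∀ n, |s n| ≤ M) :
    Summable fun n => w n * s n :=
  (hw.mul_right M).of_norm_bounded fun n => by
    rw [norm_mul, norm_of_nonneg (hw₀ n)]; exact mul_le_mul_of_nonneg_left (hs n) (hw₀ n)

lemma abs_tsum_mul_le (hw₀ : ∀ n, 0 ≤ w n) (hw : Summable w) {s : ℕ → ℝ} {M : ℝ}
    (hs : ∀ n, |s n| ≤ M) :
    |∑' n, w n * s n| ≤ (∑' n, w n) * M :=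
  tsum_of_norm_bounded (f := fun n => w n * s n) (hw.hasSum.mul_right M) fun n => by
    rw [norm_mul, norm_of_nonneg (hw₀ n)]; exact mul_le_mul_of_nonneg_left (hs n) (hw₀ n)

lemma summable_sinSeries (hw₀ : ∀ n, 0 ≤ w n) (hw : Summable w) (θ : ℝ) :
    Summable fun n => w n * |sin (θ - a n)| :=
  summable_mul_of_abs_le hw₀ hw fun n => by rw [abs_abs]; exact abs_sin_le_one _

lemma sinSeries_nonneg (hw₀ : ∀ n, 0 ≤ w n) (θ : ℝ) : 0 ≤ sinSeries w a θ :=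
  tsum_nonneg fun n => mul_nonneg (hw₀ n) (abs_nonneg _)

lemma sinSeries_le (hw₀ : ∀ n, 0 ≤ w n) (hw : Summable w) (θ : ℝ) :
    sinSeries w a θ ≤ ∑' n, w n := by
  have := abs_tsum_mul_le hw₀ hw (M := 1) fun n => by rw [abs_abs]; exact abs_sin_le_one (θ - a n)
  rw [mul_one] at this
  exact (le_abs_self _).trans this

lemma dist_sinSeries_le (hw₀ : ∀ n, 0 ≤ w n) (hw : Summable w) (x y : ℝ) :
    dist (sinSeries w a x) (sinSeries w a y) ≤ (∑' n, w n) * dist x y := by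
  have hs : ∀ n, |(|sin (x - a n)| - |sin (y - a n)|)| ≤ dist x y := fun n =>
    (abs_abs_sub_abs_le_abs_sub _ _).trans <| by
      simpa [Real.dist_eq] using abs_sin_sub_sin_le (x - a n) (y - a n)
  rw [Real.dist_eq, sinSeries, sinSeries,
    ← (summable_sinSeries a hw₀ hw x).tsum_sub (summable_sinSeries a hw₀ hw y)]
  simpa only [mul_sub] using abs_tsum_mul_le hw₀ hw hs

lemma sinSeries_periodic : Function.Periodic (sinSeries w a) (2 * π) := fun θ => by
  refine tsum_congr fun n => ?_
  rw [show θ + 2 * π - a n = θ - a n + 2 * π by ring, sin_add_two_pi]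

lemma hasSupportingSinusoid_sinSeries (hw₀ : ∀ n, 0 ≤ w n) (hw : Summable w) {q : ℝ}
    {s : ℕ → ℝ} (hs₁ : ∀ n, |s n| ≤ 1) (hs : ∀ n, s n * sin (q - a n) = |sin (q - a n)|) :
    HasSupportingSinusoid (sinSeries w a) q (∑' n, w n * (s n * cos (q - a n))) := by
  intro θ
  have hcos : ∀ n, |s n * cos (q - a n)| ≤ 1 := fun n => by
    rw [abs_mul]; exact mul_le_one₀ (hs₁ n) (abs_nonneg _) (abs_cos_le_one _)
  have hsin : ∀ n, |s n * sin (θ - a n)| ≤ 1 := fun n => by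
    rw [abs_mul]; exact mul_le_one₀ (hs₁ n) (abs_nonneg _) (abs_sin_le_one _)
  have hterm : ∀ n, s n * sin (θ - a n) ≤ |sin (θ - a n)| := fun n =>
    (le_abs_self _).trans (by rw [abs_mul]; exact mul_le_of_le_one_left (abs_nonneg _) (hs₁ n))
  calc sinSeries w a q * cos (θ - q) + (∑' n, w n * (s n * cos (q - a n))) * sin (θ - q)
      = ∑' n, w n * (s n * sin (θ - a n)) := by
        rw [sinSeries, ← tsum_mul_right, ← tsum_mul_right,
          ← ((summable_sinSeries a hw₀ hw q).mul_right _).tsum_add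
            ((summable_mul_of_abs_le hw₀ hw hcos).mul_right _)]
        congr 1; ext n
        rw [← hs n, show θ - a n = (q - a n) + (θ - q) by ring, sin_add]
        ring
    _ ≤ sinSeries w a θ :=
        (summable_mul_of_abs_le hw₀ hw hsin).tsum_le_tsum
          (fun n => mul_le_mul_of_nonneg_left (hterm n) (hw₀ n)) (summable_sinSeries a hw₀ hw θ)

lemma abs_sign_le_one (x : ℝ) : |(SignType.sign x : ℝ)| ≤ 1 := by
  rcases lt_trichotomy x 0 with h | rfl | h <;> simp [*]

lemma exists_hasSupportingSinusoid_sinSeries (hw₀ : ∀ n, 0 ≤ w n) (hw : Summable w) (q : ℝ) :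
    ∃ b, |b| ≤ ∑' n, w n ∧ HasSupportingSinusoid (sinSeries w a) q b := by
  have hs₁ : ∀ n, |(SignType.sign (sin (q - a n)) : ℝ)| ≤ 1 := fun n => abs_sign_le_one _
  refine ⟨_, ?_, hasSupportingSinusoid_sinSeries a hw₀ hw hs₁ fun n => sign_mul_self _⟩
  simpa using abs_tsum_mul_le hw₀ hw (M := 1) fun n => by
    rw [abs_mul]; exact mul_le_one₀ (hs₁ n) (abs_nonneg _) (abs_cos_le_one _)

lemma exists_hasSupportingSinusoid_sinSeries_pair (hw₀ : ∀ n, 0 ≤ w n) (hw : Summable w)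
    (m : ℕ) : ∃ b₁ b₂, b₁ - b₂ = 2 * w m ∧ HasSupportingSinusoid (sinSeries w a) (a m) b₁ ∧
      HasSupportingSinusoid (sinSeries w a) (a m) b₂ := by
  set s : ℝ → ℕ → ℝ := fun τ => Function.update (fun n => (SignType.sign (sin (a m - a n)) : ℝ)) m τ
  have hs₁ : ∀ τ, |τ| ≤ 1 → ∀ n, |s τ n| ≤ 1 := fun τ hτ n => by
    rcases eq_or_ne n m with rfl | hn
    · simpa [s] using hτ
    · simpa [s, hn] using abs_sign_le_one _
  have hs : ∀ τ n, s τ n * sin (a m - a n) = |sin (a m - a n)| := fun τ n => by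
    rcases eq_or_ne n m with rfl | hn
    · simp
    · simp [s, hn]
  have hsum : ∀ τ, |τ| ≤ 1 → Summable fun n => w n * (s τ n * cos (a m - a n)) := fun τ hτ =>
    summable_mul_of_abs_le hw₀ hw fun n => by
      rw [abs_mul]; exact mul_le_one₀ (hs₁ τ hτ n) (abs_nonneg _) (abs_cos_le_one _)
  refine ⟨_, _, ?_, hasSupportingSinusoid_sinSeries a hw₀ hw (hs₁ 1 (by simp)) (hs 1),
    hasSupportingSinusoid_sinSeries a hw₀ hw (hs₁ (-1) (by simp)) (hs (-1))⟩
  rw [← (hsum 1 (by simp)).tsum_sub (hsum (-1) (by simp)),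
    tsum_eq_single m fun n hn => by simp [s, hn]]
  simp [s]
  ring

lemma not_differentiableAt_sinSeries (hw₀ : ∀ n, 0 ≤ w n) (hw : Summable w) {m : ℕ}
    (hm : 0 < w m) : ¬ DifferentiableAt ℝ (sinSeries w a) (a m) := by
  obtain ⟨b₁, b₂, hb, h₁, h₂⟩ := exists_hasSupportingSinusoid_sinSeries_pair a hw₀ hw m
  exact not_differentiableAt_of_hasSupportingSinusoid h₁ h₂ (by linarith)

end SinSeries

section TouchingDisc

variable {P q B : ℝ}

lemma inv_sqrt_sq_add_sq (hP : 0 < P) (B : ℝ) :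
    0 < (√(P ^ 2 + B ^ 2))⁻¹ ∧ ((√(P ^ 2 + B ^ 2))⁻¹) ^ 2 * (P ^ 2 + B ^ 2) = 1 ∧
      (√(P ^ 2 + B ^ 2))⁻¹ * P ≤ 1 := by
  have hpos : 0 < P ^ 2 + B ^ 2 := by positivity
  have hP_le : P ≤ √(P ^ 2 + B ^ 2) := le_sqrt_of_sq_le (by nlinarith)
  refine ⟨by positivity, ?_, ?_⟩
  · rw [inv_pow, sq_sqrt hpos.le, inv_mul_cancel₀ hpos.ne']
  · rw [inv_mul_le_one₀ (sqrt_pos.2 hpos)]; exact hP_le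

/-- The centre of the unit disc through `polarPt P q` that is tangent there to a polar graph with
value `P` and derivative `B` at `q`: it lies on the inward normal `-(P, -B) / √(P² + B²)`, written
in the frame `(cos q, sin q), (-sin q, cos q)`. -/
def touchingCenter (P q B : ℝ) : ℝ² :=
  rotPt q ((1 - (√(P ^ 2 + B ^ 2))⁻¹) * P) ((√(P ^ 2 + B ^ 2))⁻¹ * B)

lemma dist_polarPt_touchingCenter (hP : 0 < P) : dist (polarPt P q) (touchingCenter P q B) = 1 := by
  obtain ⟨-, hk₂, -⟩ := inv_sqrt_sq_add_sq hP B
  have h : dist (polarPt P q) (touchingCenter P q B) ^ 2 = 1 := by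
    rw [touchingCenter, dist_polarPt_rotPt_sq, sub_self, cos_zero, sin_zero]
    linear_combination hk₂
  exact (pow_left_inj₀ dist_nonneg zero_le_one two_ne_zero).1 (h.trans (one_pow 2).symm)

lemma norm_touchingCenter_le (hP : P ∈ Icc (5 / 4) (13 / 10)) (hB : |B| ≤ 1 / 28) :
    ‖touchingCenter P q B‖ ≤ 1 / 2 := by
  obtain ⟨hk₀, hk₂, -⟩ := inv_sqrt_sq_add_sq (by linarith [hP.1] : 0 < P) B
  set k := (√(P ^ 2 + B ^ 2))⁻¹
  have hB2 : B ^ 2 ≤ 1 / 784 := by nlinarith [sq_abs B, abs_nonneg B]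
  have hsqrt : √(P ^ 2 + B ^ 2) ≤ P + 1 / 1000 :=
    (sqrt_le_left (by linarith [hP.1])).2 (by nlinarith [hP.1])
  have hk : 1 ≤ k * (P + 1 / 1000) :=
    calc 1 = k * √(P ^ 2 + B ^ 2) := (inv_mul_cancel₀ (inv_pos.1 hk₀).ne').symm
      _ ≤ k * (P + 1 / 1000) := mul_le_mul_of_nonneg_left hsqrt hk₀.le
  have hsq : ‖touchingCenter P q B‖ ^ 2 ≤ (1 / 2) ^ 2 := by
    rw [touchingCenter, norm_rotPt_sq]
    nlinarith [hP.1, hP.2, mul_nonneg (by linarith [hP.1] : (0 : ℝ) ≤ 2 * P) (sub_nonneg.2 hk)]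
  exact (pow_le_pow_iff_left₀ (norm_nonneg _) (by norm_num) two_ne_zero).1 hsq

lemma dist_polarPt_touchingCenter_lt (hP : P ∈ Icc (5 / 4) (13 / 10)) (hB : |B| ≤ 1 / 28) {r : ℝ}
    (hr₀ : 0 ≤ r) (hr : r < P) : dist (polarPt r q) (touchingCenter P q B) < 1 := by
  have hP₀ : 0 < P := by linarith [hP.1]
  have h := dist_smul_lt_of_norm_lt (x := polarPt P q) (t := r / P)
    ((norm_touchingCenter_le hP hB).trans_lt (by norm_num))
    (dist_polarPt_touchingCenter hP₀).le (div_nonneg hr₀ hP₀.le) ((div_lt_one hP₀).2 hr)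
  rwa [smul_polarPt, div_mul_cancel₀ _ hP₀.ne'] at h

/-- With `k = (√(P² + B²))⁻¹`, `dist (polarPt Q θ) (touchingCenter P q B) ^ 2 - 1 = D + 2 k E`
for the two brackets `D ≥ 0` and `E` below; since `0 < k ≤ 1/P`, the case `k = 1/P` suffices. -/
lemma touchingCenter_ineq_at_inv_scale {Q C Z : ℝ} (hP : 5 / 4 ≤ P) (hQ : 5 / 4 ≤ Q)
    (hCZ : C ^ 2 + Z ^ 2 = 1) (hB : B ^ 2 ≤ 1 / 784) (hsupp : (P - 5 / 4) * C + B * Z ≤ Q - 5 / 4) :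
    0 ≤ P * (Q ^ 2 + P ^ 2 - 2 * P * Q * C) + 2 * (P * Q * C - P ^ 2 - B * Q * Z) := by
  have hC : C ≤ 1 := by nlinarith [sq_nonneg Z, sq_nonneg (C - 1)]
  have hBZ : B * Z ≤ Q - P * C - 5 / 4 * (1 - C) := by linarith
  have h₁ : P * (B * Z) ≤ P * (Q - P * C - 5 / 4 * (1 - C)) :=
    mul_le_mul_of_nonneg_left hBZ (by linarith)
  have h₂ : B * Z * (Q - P) ≤ (Q - P) ^ 2 / 2 + B ^ 2 * Z ^ 2 / 2 := by
    nlinarith [sq_nonneg (Q - P - B * Z)]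
  have h₃ : Z ^ 2 ≤ 2 * (1 - C) := by nlinarith [sq_nonneg Z]
  have h₄ : 0 ≤ (P - 1) * (Q - 1) := by nlinarith
  have h₅ : B ^ 2 * Z ^ 2 ≤ 1 / 784 * (2 * (1 - C)) := by nlinarith [sq_nonneg B, sq_nonneg Z]
  nlinarith [sq_nonneg (Q - P), mul_nonneg (mul_nonneg (sub_nonneg.2 hC) (by linarith : 0 ≤ P)) h₄]

lemma one_le_dist_polarPt_touchingCenter {Q θ : ℝ} (hP : 5 / 4 ≤ P) (hB : |B| ≤ 1 / 28)
    (hQ : 5 / 4 ≤ Q) (hsupp : (P - 5 / 4) * cos (θ - q) + B * sin (θ - q) ≤ Q - 5 / 4) :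
    1 ≤ dist (polarPt Q θ) (touchingCenter P q B) := by
  have hP₀ : 0 < P := by linarith
  obtain ⟨hk₀, hk₂, hkP⟩ := inv_sqrt_sq_add_sq hP₀ B
  set k := (√(P ^ 2 + B ^ 2))⁻¹
  set C := cos (θ - q)
  set Z := sin (θ - q)
  have hCZ : C ^ 2 + Z ^ 2 = 1 := by rw [add_comm]; exact sin_sq_add_cos_sq _
  have hB2 : B ^ 2 ≤ 1 / 784 := by nlinarith [sq_abs B, abs_nonneg B]
  have hkey := touchingCenter_ineq_at_inv_scale hP hQ hCZ hB2 hsupp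
  have hD : 0 ≤ Q ^ 2 + P ^ 2 - 2 * P * Q * C := by
    nlinarith [sq_nonneg (Q - P), mul_pos hP₀ (by linarith : (0 : ℝ) < Q), neg_one_le_cos (θ - q),
      cos_le_one (θ - q)]
  have h : 1 ≤ dist (polarPt Q θ) (touchingCenter P q B) ^ 2 := by
    rw [touchingCenter, dist_polarPt_rotPt_sq]
    nlinarith [mul_nonneg hD (sub_nonneg.2 hkP), mul_nonneg hk₀.le hkey]
  nlinarith [dist_nonneg (x := polarPt Q θ) (y := touchingCenter P q B)]

end TouchingDisc

lemma epsNbhd_eq_biUnion_closedBall {E : Type*} [NormedAddCommGroup E] [NormedSpace ℝ E]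
    {s : Set E} (hs : IsCompact s) {ε : ℝ} (hε : 0 < ε) :
    epsNbhd s ε = ⋃ x ∈ s, closedBall x ε := by
  rw [epsNbhd, ← thickening_eq_biUnion_ball, closure_thickening hε,
    hs.cthickening_eq_biUnion_closedBall hε.le]

lemma ball_subset_interior_epsNbhd {X : Type*} [MetricSpace X] {s : Set X} {x : X} (hx : x ∈ s)
    (ε : ℝ) : ball x ε ⊆ interior (epsNbhd s ε) :=
  interior_maximal ((subset_biUnion_of_mem (u := fun y => ball y ε) hx).trans subset_closure)
    isOpen_ball

section StarDomain

variable (S : ℝ → ℝ)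

def centerSet : Set ℝ² := {c | ‖c‖ ≤ 1 / 2 ∧ ∀ θ, 1 ≤ dist (polarPt (S θ) θ) c}

lemma isCompact_centerSet : IsCompact (centerSet S) := by
  have h : centerSet S = closedBall 0 (1 / 2) ∩ ⋂ θ, {c | 1 ≤ dist (polarPt (S θ) θ) c} := by
    ext c; simp [centerSet]
  rw [h]
  exact (isCompact_closedBall 0 _).inter_right
    (isClosed_iInter fun θ => isClosed_le continuous_const (continuous_const.dist continuous_id))

lemma mem_epsNbhd_centerSet {x : ℝ²} :
    x ∈ epsNbhd (centerSet S) 1 ↔ ∃ c ∈ centerSet S, dist x c ≤ 1 := by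
  simp [epsNbhd_eq_biUnion_closedBall (isCompact_centerSet S) one_pos]

variable {S}

lemma touchingCenter_mem_centerSet (hS : ∀ θ, S θ ∈ Icc (5 / 4) (13 / 10)) {q B : ℝ}
    (hB : |B| ≤ 1 / 28) (h : HasSupportingSinusoid (fun θ => S θ - 5 / 4) q B) :
    touchingCenter (S q) q B ∈ centerSet S :=
  ⟨norm_touchingCenter_le (hS q) hB,
    fun θ => one_le_dist_polarPt_touchingCenter (hS q).1 hB (hS θ).1 (h θ)⟩

lemma le_of_dist_polarPt_le (hS₀ : ∀ θ, 0 ≤ S θ) {c : ℝ²} (hc : c ∈ centerSet S) {r θ : ℝ}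
    (hd : dist (polarPt r θ) c ≤ 1) : r ≤ S θ := by
  by_contra! h
  have hr : 0 < r := (hS₀ θ).trans_lt h
  have hlt := dist_smul_lt_of_norm_lt (t := S θ / r) (hc.1.trans_lt (by norm_num)) hd
    (div_nonneg (hS₀ θ) hr.le) ((div_lt_one hr).2 h)
  rw [smul_polarPt, div_mul_cancel₀ _ hr.ne'] at hlt
  exact (hc.2 θ).not_gt hlt

lemma polarPt_mem_closure_compl (hS₀ : ∀ θ, 0 < S θ) (q : ℝ) :
    polarPt (S q) q ∈ closure (epsNbhd (centerSet S) 1)ᶜ := by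
  have hlim : Tendsto (fun t : ℝ => (1 + t) • polarPt (S q) q) (𝓝[>] 0) (𝓝 (polarPt (S q) q)) := by
    have := ((continuous_const.add continuous_id).smul continuous_const).tendsto (0 : ℝ)
      (f := fun t : ℝ => (1 + t) • polarPt (S q) q)
    simpa using this.mono_left nhdsWithin_le_nhds
  refine mem_closure_of_tendsto hlim ?_
  filter_upwards [self_mem_nhdsWithin] with t (ht : 0 < t) hmem
  obtain ⟨c, hc, hd⟩ := (mem_epsNbhd_centerSet S).1 hmem
  rw [smul_polarPt] at hd
  nlinarith [le_of_dist_polarPt_le (fun θ => (hS₀ θ).le) hc hd, hS₀ q]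

theorem frontier_epsNbhd_centerSet (hS : ∀ θ, S θ ∈ Icc (5 / 4) (13 / 10))
    (hsupp : ∀ q, ∃ B, |B| ≤ 1 / 28 ∧ HasSupportingSinusoid (fun θ => S θ - 5 / 4) q B) :
    frontier (epsNbhd (centerSet S) 1) = (fun θ => polarPt (S θ) θ) '' Icc 0 (2 * π) := by
  have hS₀ : ∀ θ, 0 < S θ := fun θ => by linarith [(hS θ).1]
  have hinterior : ∀ q r, 0 ≤ r → r < S q → polarPt r q ∈ interior (epsNbhd (centerSet S) 1) := by
    intro q r hr₀ hr
    obtain ⟨B, hB, h⟩ := hsupp q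
    exact ball_subset_interior_epsNbhd (touchingCenter_mem_centerSet hS hB h) 1
      (mem_ball.2 (dist_polarPt_touchingCenter_lt (hS q) hB hr₀ hr))
  have hclosed : IsClosed (epsNbhd (centerSet S) 1) := isClosed_closure
  rw [hclosed.frontier_eq]
  ext x
  constructor
  · rintro ⟨hx, hxi⟩
    obtain ⟨θ, hθ, hxθ⟩ := exists_eq_polarPt_norm x
    obtain ⟨c, hc, hd⟩ := (mem_epsNbhd_centerSet S).1 hx
    rw [hxθ] at hd hxi
    refine ⟨θ, hθ, ?_⟩
    rcases (le_of_dist_polarPt_le (fun θ => (hS₀ θ).le) hc hd).lt_or_eq with hlt | heq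
    · exact absurd (hinterior θ _ (norm_nonneg x) hlt) hxi
    · rw [hxθ, heq]
  · rintro ⟨θ, -, rfl⟩
    obtain ⟨B, hB, h⟩ := hsupp θ
    refine ⟨(mem_epsNbhd_centerSet S).2 ⟨_, touchingCenter_mem_centerSet hS hB h,
      (dist_polarPt_touchingCenter (hS₀ θ)).le⟩, ?_⟩
    rw [interior_eq_compl_closure_compl, notMem_compl_iff]
    exact polarPt_mem_closure_compl hS₀ θ

end StarDomain

def ratEnum (n : ℕ) : ℝ := ((Denumerable.eqv ℚ).symm n : ℝ)

def weight (n : ℕ) : ℝ := (1 / 8) ^ (n + 1)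

def radialFn (θ : ℝ) : ℝ := 5 / 4 + 4⁻¹ * sinSeries weight ratEnum θ

lemma weight_pos (n : ℕ) : 0 < weight n := by unfold weight; positivity

lemma summable_weight : Summable weight :=
  (summable_geometric_of_lt_one (by norm_num) (by norm_num)).comp_injective (add_left_injective 1)

lemma tsum_weight : ∑' n, weight n = 1 / 7 := by
  simp only [weight, pow_succ, tsum_mul_right,
    tsum_geometric_of_lt_one (by norm_num : (0 : ℝ) ≤ 1 / 8) (by norm_num)]
  norm_num

lemma radialFn_mem_Icc (θ : ℝ) : radialFn θ ∈ Icc (5 / 4) (13 / 10) := by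
  have h₀ := sinSeries_nonneg ratEnum (fun n => (weight_pos n).le) θ
  have h₁ := sinSeries_le ratEnum (fun n => (weight_pos n).le) summable_weight θ
  rw [tsum_weight] at h₁
  constructor <;> simp only [radialFn] <;> linarith

lemma exists_hasSupportingSinusoid_radialFn (q : ℝ) :
    ∃ B, |B| ≤ 1 / 28 ∧ HasSupportingSinusoid (fun θ => radialFn θ - 5 / 4) q B := by
  obtain ⟨b, hb, h⟩ :=
    exists_hasSupportingSinusoid_sinSeries ratEnum (fun n => (weight_pos n).le) summable_weight q
  refine ⟨4⁻¹ * b, ?_, ?_⟩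
  · rw [tsum_weight] at hb
    rw [abs_mul, abs_of_pos (by norm_num : (0 : ℝ) < 4⁻¹)]
    linarith
  · simpa only [radialFn, add_sub_cancel_left] using h.const_mul (by norm_num : (0 : ℝ) ≤ 4⁻¹)

lemma lipschitzWith_radialFn : LipschitzWith 1 radialFn := by
  refine LipschitzWith.of_dist_le_mul fun x y => ?_
  have h := dist_sinSeries_le ratEnum (fun n => (weight_pos n).le) summable_weight x y
  rw [tsum_weight] at h
  calc dist (radialFn x) (radialFn y)
      = 4⁻¹ * dist (sinSeries weight ratEnum x) (sinSeries weight ratEnum y) := by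
        rw [radialFn, radialFn, dist_add_left, dist_eq_norm, ← mul_sub, norm_mul, ← dist_eq_norm,
          norm_inv, RCLike.norm_ofNat]
    _ ≤ (1 : ℝ≥0) * dist x y := by
        push_cast; nlinarith [dist_nonneg (x := x) (y := y)]

lemma radialFn_two_pi : radialFn (2 * π) = radialFn 0 := by
  rw [radialFn, radialFn, ← zero_add (2 * π), sinSeries_periodic]

lemma not_differentiableAt_radialFn (q : ℚ) : ¬ DifferentiableAt ℝ radialFn q := by
  intro h
  have hT : sinSeries weight ratEnum = fun θ => 4 * (radialFn θ - 5 / 4) := by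
    ext θ; simp only [radialFn]; ring
  refine not_differentiableAt_sinSeries ratEnum (fun n => (weight_pos n).le) summable_weight
    (weight_pos (Denumerable.eqv ℚ q)) ?_
  rw [hT, ratEnum, Equiv.symm_apply_apply]
  exact (h.sub_const _).const_mul _

end PolarBoundary

/-- There exist a compact set `E ⊆ ℝ²`, `ε > 0` and a positive Lipschitz function
`S : [0, 2π] → ℝ` with `S 0 = S (2π)`, such that `∂E_ε` is the polar graph of `S` and `S`
is not differentiable at any rational in `(0, 2π]`. -/
theorem exists_boundary_polar_graph_nondifferentiable_at_rationals :
    ∃ (E : Set (EuclideanSpace ℝ (Fin 2))) (ε : ℝ) (S : ℝ → ℝ) (K : ℝ≥0),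
      IsCompact E ∧ 0 < ε ∧
      LipschitzOnWith K S (Set.Icc 0 (2 * Real.pi)) ∧
      (∀ x ∈ Set.Icc 0 (2 * Real.pi), 0 < S x) ∧
      S 0 = S (2 * Real.pi) ∧
      frontier (epsNbhd E ε) =
        (fun θ : ℝ => pt (S θ * Real.cos θ) (S θ * Real.sin θ)) '' Set.Icc 0 (2 * Real.pi) ∧
      ∀ q : ℚ, (q : ℝ) ∈ Set.Ioc 0 (2 * Real.pi) →
        ¬ DifferentiableWithinAt ℝ S (Set.Icc 0 (2 * Real.pi)) (q : ℝ) := by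
  open PolarBoundary in
  refine ⟨centerSet radialFn, 1, radialFn, 1, isCompact_centerSet _, one_pos,
    lipschitzWith_radialFn.lipschitzOnWith, fun θ _ => by linarith [(radialFn_mem_Icc θ).1],
    radialFn_two_pi.symm,
    frontier_epsNbhd_centerSet radialFn_mem_Icc exists_hasSupportingSinusoid_radialFn,
    fun q hq hdiff =>
      not_differentiableAt_radialFn q (hdiff.differentiableAt (Icc_mem_nhds hq.1 ?_))⟩
  have hne : (q : ℝ) ≠ 2 * Real.pi := fun h => irrational_pi ⟨q / 2, by push_cast; linarith⟩
  exact hq.2.lt_of_ne hne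
end
end

section
/- Let q : ℕ → ℚ ∩ [0, 2π] be a bijective enumeration of the rationals in [0, 2π], let (m_n) be a sequence of positive reals with Σ_{n} m_n < ∞, let f(x) := Σ_{n : q_n ≤ x} m_n and I(x) := ∫₀ˣ f(t) dt for x ∈ [0, 2π]. Then I is convex on [0, 2π]; I is differentiable at every irrational x ∈ (0, 2π) with I'(x) = f(x); and at every rational q_n ∈ (0, 2π) the one-sided derivatives of I exist and the right derivative exceeds the left derivative by m_n > 0, so I is not differentiable at any rational in (0, 2π). -/
/-!
`I` is a primitive of the monotone function `f`, hence convex, and by the fundamental theorem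
of calculus its left and right derivatives at `b` are the one-sided limits of `f` at `b`.
By dominated convergence (the terms are bounded by `|m n|`) the jump function is
right-continuous with left limit `∑_{q n < x} m n`, so its jump at `x` is `∑_{q n = x} m n`:
this is `m n` at `x = q n` by injectivity of `q`, and `0` at irrational `x`.
-/

open Set Filter Function MeasureTheory Topology

theorem nhdsLE_inf_ae_le_nhdsLT {μ : Measure ℝ} [NullSingletonClass μ] (b : ℝ) :
    𝓝[≤] b ⊓ ae μ ≤ 𝓝[<] b := by
  rw [← Iic_sdiff_right, sdiff_eq, nhdsWithin_inter']
  exact inf_le_inf_left _ (le_principal_iff.2 (compl_mem_ae_iff.2 (measure_singleton b)))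

theorem HasDerivWithinAt.hasDerivAt_of_Iic_of_Ici {F : ℝ → ℝ} {d x : ℝ}
    (hl : HasDerivWithinAt F d (Iic x) x) (hr : HasDerivWithinAt F d (Ici x) x) :
    HasDerivAt F d x := by
  simpa [Iic_union_Ici] using hl.union hr

theorem not_differentiableAt_of_hasDerivWithinAt_Iic_of_Ici {F : ℝ → ℝ} {dl dr x : ℝ}
    (hl : HasDerivWithinAt F dl (Iic x) x) (hr : HasDerivWithinAt F dr (Ici x) x)
    (hne : dl ≠ dr) : ¬DifferentiableAt ℝ F x := fun hF =>
  hne <| ((uniqueDiffOn_Iic x x self_mem_Iic).eq_deriv _ hl hF.hasDerivAt.hasDerivWithinAt).trans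
    ((uniqueDiffOn_Ici x x self_mem_Ici).eq_deriv _ hr hF.hasDerivAt.hasDerivWithinAt).symm

namespace Monotone

variable {f : ℝ → ℝ}

theorem convexOn_intervalIntegral (hf : Monotone f) (a : ℝ) :
    ConvexOn ℝ univ fun x => ∫ t in a..x, f t := by
  refine convexOn_of_slope_mono_adjacent convex_univ fun {x y z} _ _ hxy hyz => ?_
  rw [intervalIntegral.integral_interval_sub_left hf.intervalIntegrable hf.intervalIntegrable,
    intervalIntegral.integral_interval_sub_left hf.intervalIntegrable hf.intervalIntegrable,
    div_le_div_iff₀ (sub_pos.2 hxy) (sub_pos.2 hyz)]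
  have hleft : ∫ t in x..y, f t ≤ (y - x) * f y := by
    simpa using intervalIntegral.integral_mono_on (μ := volume) hxy.le hf.intervalIntegrable
      intervalIntegrable_const fun t ht => hf ht.2
  have hright : (z - y) * f y ≤ ∫ t in y..z, f t := by
    simpa using intervalIntegral.integral_mono_on (μ := volume) hyz.le intervalIntegrable_const
      hf.intervalIntegrable fun t ht => hf ht.1
  calc (∫ t in x..y, f t) * (z - y) ≤ (y - x) * f y * (z - y) := by gcongr
    _ = (z - y) * f y * (y - x) := by ring
    _ ≤ (∫ t in y..z, f t) * (y - x) := by gcongr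

theorem hasDerivWithinAt_intervalIntegral_Iic (hf : Monotone f) (a b : ℝ) :
    HasDerivWithinAt (fun x => ∫ t in a..x, f t) (leftLim f b) (Iic b) b :=
  intervalIntegral.integral_hasDerivWithinAt_of_tendsto_ae_right hf.intervalIntegrable
    hf.measurable.aestronglyMeasurable.stronglyMeasurableAtFilter
    ((hf.tendsto_leftLim b).mono_left (nhdsLE_inf_ae_le_nhdsLT b))

theorem hasDerivWithinAt_intervalIntegral_Ici (hf : Monotone f) (a b : ℝ) :
    HasDerivWithinAt (fun x => ∫ t in a..x, f t) (rightLim f b) (Ici b) b :=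
  intervalIntegral.integral_hasDerivWithinAt_of_tendsto_ae_right hf.intervalIntegrable
    hf.measurable.aestronglyMeasurable.stronglyMeasurableAtFilter
    ((hf.tendsto_rightLim b).mono_left inf_le_left)

end Monotone

section IteSum

variable {ι : Type*} {m : ι → ℝ}

theorem Summable.ite_zero (hsum : Summable m) (p : ι → Prop) [DecidablePred p] :
    Summable fun i => if p i then m i else 0 :=
  hsum.abs.of_norm_bounded fun i => by split_ifs <;> simp

theorem Summable.tendsto_tsum_ite {α : Type*} (hsum : Summable m) {l : Filter α}
    {p : α → ι → Prop} [∀ y i, Decidable (p y i)] {r : ι → Prop} [DecidablePred r]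
    (h : ∀ i, ∀ᶠ y in l, p y i ↔ r i) :
    Tendsto (fun y => ∑' i, if p y i then m i else 0) l (𝓝 (∑' i, if r i then m i else 0)) :=
  tendsto_tsum_of_dominated_convergence hsum.abs
    (fun i => tendsto_const_nhds.congr' <| (h i).mono fun y hy => by simp only [hy])
    (Eventually.of_forall fun y i => by split_ifs <;> simp)

end IteSum

noncomputable def jumpFunction {ι : Type*} (q m : ι → ℝ) (x : ℝ) : ℝ :=
  ∑' i, if q i ≤ x then m i else 0

namespace jumpFunction

variable {ι : Type*} {q m : ι → ℝ}

theorem monotone (hm : ∀ i, 0 ≤ m i) (hsum : Summable m) : Monotone (jumpFunction q m) :=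
  fun x y hxy => Summable.tsum_le_tsum (fun i => by split_ifs <;> grind)
    (hsum.ite_zero _) (hsum.ite_zero _)

theorem tendsto_nhdsGT (hsum : Summable m) (x : ℝ) :
    Tendsto (jumpFunction q m) (𝓝[>] x) (𝓝 (jumpFunction q m x)) := by
  refine hsum.tendsto_tsum_ite fun i => ?_
  rcases le_or_gt (q i) x with hi | hi
  · exact eventually_nhdsWithin_of_forall fun y (hy : x < y) => iff_of_true (by linarith) hi
  · filter_upwards [Ioo_mem_nhdsGT hi] with y hy
    exact iff_of_false (by linarith [hy.2]) (by linarith)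

theorem tendsto_nhdsLT (hsum : Summable m) (x : ℝ) :
    Tendsto (jumpFunction q m) (𝓝[<] x) (𝓝 (∑' i, if q i < x then m i else 0)) := by
  refine hsum.tendsto_tsum_ite fun i => ?_
  rcases lt_or_ge (q i) x with hi | hi
  · filter_upwards [Ioo_mem_nhdsLT hi] with y hy
    exact iff_of_true hy.1.le hi
  · exact eventually_nhdsWithin_of_forall fun y (hy : y < x) =>
      iff_of_false (by linarith) (by linarith)

theorem rightLim_eq (hsum : Summable m) (x : ℝ) :
    rightLim (jumpFunction q m) x = jumpFunction q m x :=
  rightLim_eq_of_tendsto (tendsto_nhdsGT hsum x)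

theorem sub_leftLim (hsum : Summable m) (x : ℝ) :
    jumpFunction q m x - leftLim (jumpFunction q m) x = ∑' i, if q i = x then m i else 0 := by
  rw [leftLim_eq_of_tendsto (tendsto_nhdsLT hsum x), jumpFunction,
    ← (hsum.ite_zero _).tsum_sub (hsum.ite_zero _)]
  exact tsum_congr fun i => by split_ifs <;> grind

theorem sub_leftLim_apply (hq : Injective q) (hsum : Summable m) (k : ι) :
    jumpFunction q m (q k) - leftLim (jumpFunction q m) (q k) = m k := by
  rw [sub_leftLim hsum, tsum_eq_single k fun i hi => if_neg (hq.ne hi), if_pos rfl]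

theorem leftLim_eq_of_notMem_range (hsum : Summable m) {x : ℝ} (hx : x ∉ range q) :
    leftLim (jumpFunction q m) x = jumpFunction q m x := by
  rw [eq_comm, ← sub_eq_zero, sub_leftLim hsum]
  exact (tsum_congr fun i => if_neg fun h => hx ⟨i, h⟩).trans tsum_zero

end jumpFunction

theorem integral_of_jump_function_properties_general
    (q : ℕ → ℚ) (hq : Function.Injective q)
    (m : ℕ → ℝ) (hm : ∀ n, 0 < m n) (hsum : Summable m)
    (f I : ℝ → ℝ)
    (hf : ∀ x : ℝ, f x = ∑' n : ℕ, if (q n : ℝ) ≤ x then m n else 0)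
    (hI : ∀ x : ℝ, I x = ∫ t in (0:ℝ)..x, f t) :
    ConvexOn ℝ (Set.Icc 0 (2 * Real.pi)) I ∧
    (∀ x ∈ Set.Ioo (0:ℝ) (2 * Real.pi), Irrational x → HasDerivAt I (f x) x) ∧
    (∀ n : ℕ, (q n : ℝ) ∈ Set.Ioo 0 (2 * Real.pi) →
      ∃ dl dr : ℝ,
        HasDerivWithinAt I dl (Set.Iic (q n : ℝ)) (q n : ℝ) ∧
        HasDerivWithinAt I dr (Set.Ici (q n : ℝ)) (q n : ℝ) ∧
        dr - dl = m n ∧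
        ¬ DifferentiableAt ℝ I (q n : ℝ)) := by
  obtain rfl : f = jumpFunction (fun n => (q n : ℝ)) m := funext hf
  obtain rfl : I = fun x => ∫ t in (0:ℝ)..x, jumpFunction (fun n => (q n : ℝ)) m t :=
    funext hI
  have hmono := jumpFunction.monotone (q := fun n => (q n : ℝ)) (fun n => (hm n).le) hsum
  have hleft (x : ℝ) := hmono.hasDerivWithinAt_intervalIntegral_Iic 0 x
  have hright (x : ℝ) :=
    jumpFunction.rightLim_eq hsum x ▸ hmono.hasDerivWithinAt_intervalIntegral_Ici 0 x
  refine ⟨(hmono.convexOn_intervalIntegral 0).subset (subset_univ _) (convex_Icc _ _),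
    fun x _ hx => ?_, fun n _ => ?_⟩
  · have hx' : x ∉ range fun n => (q n : ℝ) := by
      rintro ⟨n, rfl⟩
      exact hx ⟨q n, rfl⟩
    exact (jumpFunction.leftLim_eq_of_notMem_range hsum hx' ▸ hleft x).hasDerivAt_of_Iic_of_Ici
      (hright x)
  · have hjump := jumpFunction.sub_leftLim_apply (Rat.cast_injective.comp hq) hsum n
    refine ⟨_, _, hleft _, hright _, hjump, ?_⟩
    exact not_differentiableAt_of_hasDerivWithinAt_Iic_of_Ici (hleft _) (hright _)
      (sub_pos.1 (hjump ▸ hm n)).ne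

/-- **The integral of the jump function.**
With `f` the jump function of a bijective enumeration `q` of the rationals in `[0, 2π]`
with positive summable jumps `(m n)`, the integral function `I x = ∫_0^x f` is convex on
`[0, 2π]`, differentiable with derivative `f x` at every irrational `x ∈ (0, 2π)`, and at
every rational `q n ∈ (0, 2π)` both one-sided derivatives exist with the right derivative
exceeding the left one by `m n > 0`, so `I` is not differentiable there. -/
theorem integral_of_jump_function_properties
    (q : ℕ → ℚ) (hq : Function.Injective q)
    (hrange : Set.range q = {r : ℚ | (r : ℝ) ∈ Set.Icc 0 (2 * Real.pi)})
    (m : ℕ → ℝ) (hm : ∀ n, 0 < m n) (hsum : Summable m)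
    (f I : ℝ → ℝ)
    (hf : ∀ x : ℝ, f x = ∑' n : ℕ, if (q n : ℝ) ≤ x then m n else 0)
    (hI : ∀ x : ℝ, I x = ∫ t in (0:ℝ)..x, f t) :
    ConvexOn ℝ (Set.Icc 0 (2 * Real.pi)) I ∧
    (∀ x ∈ Set.Ioo (0:ℝ) (2 * Real.pi), Irrational x → HasDerivAt I (f x) x) ∧
    (∀ n : ℕ, (q n : ℝ) ∈ Set.Ioo 0 (2 * Real.pi) →
      ∃ dl dr : ℝ,
        HasDerivWithinAt I dl (Set.Iic (q n : ℝ)) (q n : ℝ) ∧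
        HasDerivWithinAt I dr (Set.Ici (q n : ℝ)) (q n : ℝ) ∧
        dr - dl = m n ∧
        ¬ DifferentiableAt ℝ I (q n : ℝ)) :=
  integral_of_jump_function_properties_general q hq m hm hsum f I hf hI
end
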